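/- arXiv:2103.11289 — 2 statements merged into one kernel-verified Lean document; each statement's English description precedes it below -/
import Mathlib

section
/- Fix constants l₁ > 0 and l > 0, and let u : ℝ² × [0,∞) → ℝ be a smooth positive solution of the quasi-spherical equation ∂u/∂t = (l₁+t)·u²·( (l₁+t)⁻² ∂²u/∂θ₁² + l⁻² ∂²u/∂θ₂² ) that is 2π-periodic in the first two variables. Define M(t) = sup over (θ₁,θ₂) ∈ ℝ² of u(θ₁,θ₂,t) and m(t) = inf over (θ₁,θ₂) ∈ ℝ² of u(θ₁,θ₂,t). Then M is monotone non-increasing in t and m is monotone non-decreasing in t. -/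
/-
Weak maximum principle. At a spatial maximum of `u(·, t)` both second derivatives in `θ₁, θ₂`
are `≤ 0`, and the coefficient `(l₁ + t) u²` is `≥ 0`, so `∂ₜu ≤ 0` there. To make this strict,
maximise `u - ε t` over a period cell times `[t₀, t₁]`: at a maximum with time `s > t₀` the
left time-derivative would be `≥ 0`, i.e. `∂ₜu ≥ ε`, which is impossible. Hence the maximum
sits at `t₀`, and letting `ε → 0` gives `sup u(·, t₁) ≤ sup u(·, t₀)`. The equation is odd in `u`,
so `-u` is again a solution, which gives the statement for the infimum.
-/

open Real Set

/-- `u : ℝ → ℝ → ℝ → ℝ` (arguments `θ₁ θ₂ t`) is smooth on `ℝ² × [0,∞)`. -/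
def SmoothOnHalf (u : ℝ → ℝ → ℝ → ℝ) : Prop :=
  ContDiffOn ℝ (⊤ : ℕ∞) (fun p : ℝ × ℝ × ℝ => u p.1 p.2.1 p.2.2)
    {p : ℝ × ℝ × ℝ | 0 ≤ p.2.2}

/-- `u` is `2π`-periodic in its first two variables. -/
def Periodic2 (u : ℝ → ℝ → ℝ → ℝ) : Prop :=
  ∀ θ₁ θ₂ t : ℝ, u (θ₁ + 2 * π) θ₂ t = u θ₁ θ₂ t ∧ u θ₁ (θ₂ + 2 * π) t = u θ₁ θ₂ t

/-- `u` satisfies the quasi-spherical equation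
`∂u/∂t = (l₁+t)·u²·((l₁+t)⁻² ∂²u/∂θ₁² + l⁻² ∂²u/∂θ₂²)` at every point of `ℝ² × [0,∞)`,
where the `t`-derivative is taken within `[0,∞)`. -/
def QuasiSphericalSol (l₁ l : ℝ) (u : ℝ → ℝ → ℝ → ℝ) : Prop :=
  ∀ θ₁ θ₂ t : ℝ, 0 ≤ t →
    derivWithin (fun s => u θ₁ θ₂ s) (Ici (0 : ℝ)) t =
      (l₁ + t) * (u θ₁ θ₂ t) ^ 2 *
        (((l₁ + t) ^ 2)⁻¹ * deriv (deriv fun a => u a θ₂ t) θ₁ +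
          (l ^ 2)⁻¹ * deriv (deriv fun b => u θ₁ b t) θ₂)

open Filter Topology

theorem IsLocalMax.deriv_deriv_nonpos {f : ℝ → ℝ} {a : ℝ} (h : IsLocalMax f a)
    (hc : ContinuousAt f a) : deriv (deriv f) a ≤ 0 := by
  by_contra! hpos
  -- the second derivative test makes `a` also a local minimum, so `f` is constant near `a`
  have hmin := isLocalMin_of_deriv_deriv_pos hpos h.deriv_eq_zero hc
  have hconst : f =ᶠ[𝓝 a] fun _ => f a := (h.and hmin).mono fun _ hx => le_antisymm hx.1 hx.2
  have hderiv : deriv f =ᶠ[𝓝 a] fun _ => 0 :=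
    hconst.eventuallyEq_nhds.mono fun _ hx => hx.deriv_eq.trans (deriv_const _ _)
  simp [hderiv.deriv_eq] at hpos

theorem IsLocalMaxOn.hasDerivWithinAt_Iic_nonneg {f : ℝ → ℝ} {b d : ℝ}
    (h : IsLocalMaxOn f (Iic b) b) (hd : HasDerivWithinAt f d (Iic b) b) : 0 ≤ d := by
  have hcone : (-1 : ℝ) ∈ posTangentConeAt (Iic b) b := by
    apply mem_posTangentConeAt_of_segment_subset
    rw [segment_symm, ← sub_eq_add_neg, segment_eq_Icc (by linarith)]
    exact Icc_subset_Iic_self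
  simpa using h.hasFDerivWithinAt_nonpos hd.hasFDerivWithinAt hcone

section MaxPrinciple

variable {E : Type*} [TopologicalSpace E] {K : Set E} {v : E → ℝ → ℝ} {t₀ t₁ : ℝ}

theorem exists_forall_sub_mul_le_of_hasDerivWithinAt_nonpos (hK : IsCompact K)
    (hKne : K.Nonempty) (hrange : ∀ x t, ∃ y ∈ K, v y t = v x t) (h01 : t₀ ≤ t₁)
    (hcont : ContinuousOn (fun p : E × ℝ => v p.1 p.2) (K ×ˢ Icc t₀ t₁))
    (hmax : ∀ q, ∀ t ∈ Ioc t₀ t₁, (∀ x, v x t ≤ v q t) →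
      ∃ d ≤ 0, HasDerivWithinAt (v q) d (Iic t) t)
    {ε : ℝ} (hε : 0 < ε) : ∃ q, ∀ x, v x t₁ - ε * t₁ ≤ v q t₀ - ε * t₀ := by
  obtain ⟨⟨q, s⟩, ⟨-, hs⟩, hqs⟩ := (hK.prod isCompact_Icc).exists_isMaxOn
    (f := fun p : E × ℝ => v p.1 p.2 - ε * p.2) (hKne.prod (nonempty_Icc.2 h01))
    (hcont.sub (continuous_const.mul continuous_snd).continuousOn)
  have hle : ∀ x, ∀ r ∈ Icc t₀ t₁, v x r - ε * r ≤ v q s - ε * s := by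
    intro x r hr
    obtain ⟨y, hy, hyx⟩ := hrange x r
    rw [← hyx]
    exact hqs (mk_mem_prod hy hr)
  obtain rfl : s = t₀ := by
    by_contra hne
    have hs' : s ∈ Ioc t₀ t₁ := ⟨lt_of_le_of_ne hs.1 (Ne.symm hne), hs.2⟩
    obtain ⟨d, hd, hderiv⟩ := hmax q s hs' fun x => by linarith [hle x s hs]
    have hlocal : IsLocalMaxOn (fun r => v q r - ε * r) (Iic s) s := by
      filter_upwards [Icc_mem_nhdsLE hs'.1] with r hr
      exact hle q r ⟨hr.1, hr.2.trans hs.2⟩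
    have hleft : 0 ≤ d - ε * 1 :=
      hlocal.hasDerivWithinAt_Iic_nonneg (hderiv.sub ((hasDerivWithinAt_id _ _).const_mul ε))
    linarith
  exact ⟨q, fun x => hle x t₁ ⟨h01, le_rfl⟩⟩

theorem exists_forall_le_of_hasDerivWithinAt_nonpos (hK : IsCompact K)
    (hKne : K.Nonempty) (hrange : ∀ x t, ∃ y ∈ K, v y t = v x t) (h01 : t₀ ≤ t₁)
    (hcont : ContinuousOn (fun p : E × ℝ => v p.1 p.2) (K ×ˢ Icc t₀ t₁))
    (hmax : ∀ q, ∀ t ∈ Ioc t₀ t₁, (∀ x, v x t ≤ v q t) →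
      ∃ d ≤ 0, HasDerivWithinAt (v q) d (Iic t) t) :
    ∃ q, ∀ x, v x t₁ ≤ v q t₀ := by
  obtain ⟨q, hq⟩ := exists_forall_sub_mul_le_of_hasDerivWithinAt_nonpos hK hKne hrange le_rfl
    (hcont.mono (prod_mono_right (Icc_subset_Icc_right h01)))
    (fun q t ht => hmax q t ⟨ht.1, ht.2.trans h01⟩) one_pos
  refine ⟨q, fun x => le_of_forall_pos_le_add fun δ hδ => ?_⟩
  have hε : 0 < δ / (t₁ - t₀ + 1) := div_pos hδ (by linarith)
  obtain ⟨qε, hqε⟩ :=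
    exists_forall_sub_mul_le_of_hasDerivWithinAt_nonpos hK hKne hrange h01 hcont hmax hε
  have hpenalty : δ / (t₁ - t₀ + 1) * (t₁ - t₀) ≤ δ := by
    rw [div_mul_eq_mul_div, div_le_iff₀ (by linarith)]
    nlinarith
  linarith [hqε x, hq qε]

end MaxPrinciple

section SupInf

variable {ι α β : Type*} [Preorder α] [ConditionallyCompleteLattice β] {S : Set α}
  {v : ι → α → β}

theorem antitoneOn_ciSup_of_exists_forall_le
    (h : ∀ t₀ ∈ S, ∀ t₁ ∈ S, t₀ ≤ t₁ → ∃ q, ∀ x, v x t₁ ≤ v q t₀) :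
    AntitoneOn (fun t => ⨆ x, v x t) S := by
  intro t₀ ht₀ t₁ ht₁ h01
  obtain ⟨q, hq⟩ := h t₀ ht₀ t₁ ht₁ h01
  obtain ⟨q₀, hq₀⟩ := h t₀ ht₀ t₀ ht₀ le_rfl
  have : Nonempty ι := ⟨q⟩
  exact ciSup_le fun x => (hq x).trans (le_ciSup ⟨v q₀ t₀, forall_mem_range.2 hq₀⟩ q)

theorem monotoneOn_ciInf_of_exists_forall_le
    (h : ∀ t₀ ∈ S, ∀ t₁ ∈ S, t₀ ≤ t₁ → ∃ q, ∀ x, v q t₀ ≤ v x t₁) :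
    MonotoneOn (fun t => ⨅ x, v x t) S :=
  antitoneOn_ciSup_of_exists_forall_le (β := βᵒᵈ) h

end SupInf

section QuasiSpherical

variable {l₁ l : ℝ} {u : ℝ → ℝ → ℝ → ℝ}

theorem SmoothOnHalf.differentiableAt (hs : SmoothOnHalf u) {a b t : ℝ} (ht : 0 < t) :
    DifferentiableAt ℝ (fun p : ℝ × ℝ × ℝ => u p.1 p.2.1 p.2.2) (a, b, t) := by
  have hopen : IsOpen {p : ℝ × ℝ × ℝ | 0 < p.2.2} := isOpen_lt continuous_const (by fun_prop)
  have hnhds : {p : ℝ × ℝ × ℝ | 0 ≤ p.2.2} ∈ 𝓝 (a, b, t) :=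
    mem_of_superset (hopen.mem_nhds ht) fun (p : ℝ × ℝ × ℝ) (hp : 0 < p.2.2) => hp.le
  exact (hs.contDiffAt hnhds).differentiableAt (by simp)

theorem SmoothOnHalf.neg (hs : SmoothOnHalf u) : SmoothOnHalf (-u) :=
  ContDiffOn.neg hs

theorem Periodic2.neg (hper : Periodic2 u) : Periodic2 (-u) := fun θ₁ θ₂ t => by
  simp [hper θ₁ θ₂ t]

theorem Periodic2.exists_mem_Icc (hper : Periodic2 u) (x : ℝ × ℝ) (t : ℝ) :
    ∃ y ∈ Icc 0 (2 * π) ×ˢ Icc 0 (2 * π), u y.1 y.2 t = u x.1 x.2 t := by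
  have h₁ : Function.Periodic (fun a => u a x.2 t) (2 * π) := fun a => (hper a x.2 t).1
  obtain ⟨a, ha, hxa⟩ := h₁.exists_mem_Ico₀ two_pi_pos x.1
  have h₂ : Function.Periodic (fun b => u a b t) (2 * π) := fun b => (hper a b t).2
  obtain ⟨b, hb, hyb⟩ := h₂.exists_mem_Ico₀ two_pi_pos x.2
  exact ⟨(a, b), ⟨Ico_subset_Icc_self ha, Ico_subset_Icc_self hb⟩, (hxa.trans hyb).symm⟩

theorem QuasiSphericalSol.neg (hsol : QuasiSphericalSol l₁ l u) :
    QuasiSphericalSol l₁ l (-u) := by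
  intro θ₁ θ₂ t ht
  simp only [Pi.neg_apply, derivWithin.fun_neg, deriv.fun_neg', deriv.fun_neg, neg_sq,
    hsol θ₁ θ₂ t ht]
  ring

theorem QuasiSphericalSol.exists_hasDerivAt_nonpos_of_forall_le (hsol : QuasiSphericalSol l₁ l u)
    (hl₁ : 0 < l₁) (hs : SmoothOnHalf u) {q : ℝ × ℝ} {t : ℝ} (ht : 0 < t)
    (hmax : ∀ p : ℝ × ℝ, u p.1 p.2 t ≤ u q.1 q.2 t) :
    ∃ d ≤ 0, HasDerivAt (fun s => u q.1 q.2 s) d t := by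
  have hdiff : DifferentiableAt ℝ (fun s => u q.1 q.2 s) t :=
    (hs.differentiableAt ht).comp (f := fun s => (q.1, q.2, s)) t (by fun_prop)
  have h₁ : deriv (deriv fun a => u a q.2 t) q.1 ≤ 0 :=
    IsLocalMax.deriv_deriv_nonpos (Eventually.of_forall fun a => hmax (a, q.2))
      ((hs.differentiableAt ht).continuousAt.comp (f := fun a => (a, q.2, t)) (by fun_prop))
  have h₂ : deriv (deriv fun b => u q.1 b t) q.2 ≤ 0 :=
    IsLocalMax.deriv_deriv_nonpos (Eventually.of_forall fun b => hmax (q.1, b))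
      ((hs.differentiableAt ht).continuousAt.comp (f := fun b => (q.1, b, t)) (by fun_prop))
  refine ⟨_, ?_, hdiff.hasDerivAt⟩
  rw [← derivWithin_of_mem_nhds (Ici_mem_nhds ht), hsol q.1 q.2 t ht.le]
  exact mul_nonpos_of_nonneg_of_nonpos (mul_nonneg (by linarith) (sq_nonneg _))
    (add_nonpos (mul_nonpos_of_nonneg_of_nonpos (by positivity) h₁)
      (mul_nonpos_of_nonneg_of_nonpos (by positivity) h₂))

theorem QuasiSphericalSol.exists_forall_le (hsol : QuasiSphericalSol l₁ l u) (hl₁ : 0 < l₁)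
    (hs : SmoothOnHalf u) (hper : Periodic2 u) {t₀ t₁ : ℝ} (ht₀ : 0 ≤ t₀) (h01 : t₀ ≤ t₁) :
    ∃ q : ℝ × ℝ, ∀ p : ℝ × ℝ, u p.1 p.2 t₁ ≤ u q.1 q.2 t₀ := by
  refine exists_forall_le_of_hasDerivWithinAt_nonpos (v := fun p t => u p.1 p.2 t)
    (isCompact_Icc.prod isCompact_Icc) ⟨(0, 0), by simp [two_pi_pos.le]⟩ hper.exists_mem_Icc h01
    ?_ fun q t ht hq => ?_
  · exact hs.continuousOn.comp (f := fun p : (ℝ × ℝ) × ℝ => (p.1.1, p.1.2, p.2)) (by fun_prop)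
      fun p hp => ht₀.trans hp.2.1
  · obtain ⟨d, hd, hderiv⟩ :=
      hsol.exists_hasDerivAt_nonpos_of_forall_le hl₁ hs (ht₀.trans_lt ht.1) hq
    exact ⟨d, hd, hderiv.hasDerivWithinAt⟩

end QuasiSpherical

theorem stmt6_general (l₁ l : ℝ) (hl₁ : 0 < l₁)
    (u : ℝ → ℝ → ℝ → ℝ)
    (hsmooth : SmoothOnHalf u)
    (hper : Periodic2 u)
    (hsol : QuasiSphericalSol l₁ l u) :
    AntitoneOn (fun t => ⨆ p : ℝ × ℝ, u p.1 p.2 t) (Ici (0 : ℝ)) ∧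
      MonotoneOn (fun t => ⨅ p : ℝ × ℝ, u p.1 p.2 t) (Ici (0 : ℝ)) := by
  refine ⟨antitoneOn_ciSup_of_exists_forall_le fun t₀ ht₀ _ _ h01 =>
    hsol.exists_forall_le hl₁ hsmooth hper ht₀ h01,
    monotoneOn_ciInf_of_exists_forall_le fun t₀ ht₀ _ _ h01 => ?_⟩
  obtain ⟨q, hq⟩ := hsol.neg.exists_forall_le hl₁ hsmooth.neg hper.neg ht₀ h01
  exact ⟨q, fun p => neg_le_neg_iff.1 (hq p)⟩

theorem stmt6 (l₁ l : ℝ) (hl₁ : 0 < l₁) (hl : 0 < l)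
    (u : ℝ → ℝ → ℝ → ℝ)
    (hsmooth : SmoothOnHalf u)
    (hpos : ∀ θ₁ θ₂ t : ℝ, 0 ≤ t → 0 < u θ₁ θ₂ t)
    (hper : Periodic2 u)
    (hsol : QuasiSphericalSol l₁ l u) :
    AntitoneOn (fun t => ⨆ p : ℝ × ℝ, u p.1 p.2 t) (Ici (0 : ℝ)) ∧
      MonotoneOn (fun t => ⨅ p : ℝ × ℝ, u p.1 p.2 t) (Ici (0 : ℝ)) :=
  stmt6_general l₁ l hl₁ u hsmooth hper hsol
end

section
/- Fix constants l₁ > 0 and l > 0, and let u : ℝ² × [0,∞) → ℝ be a smooth positive solution of the quasi-spherical equation ∂u/∂t = (l₁+t)·u²·( (l₁+t)⁻² ∂²u/∂θ₁² + l⁻² ∂²u/∂θ₂² ) that is 2π-periodic in the first two variables. Then the quantity ∫_{[0,2π]²} u(θ₁,θ₂,t)⁻¹ dθ₁ dθ₂ is independent of t; equivalently, the total integral of u⁻¹ against the area element of the flat torus 𝕊¹(l₁+t) × 𝕊¹(l), namely (l₁+t)·l·∫_{[0,2π]²} u(·,·,t)⁻¹ dθ₁ dθ₂, equals ((l₁+t)/l₁)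 times its value at t = 0. -/
open Real Set

/-!
Along the flow, `∂ₜ(u⁻¹) = -u⁻² ∂ₜu = -(l₁+t)((l₁+t)⁻² ∂²u/∂θ₁² + l⁻² ∂²u/∂θ₂²)`: the factor `u²`
cancels and the time derivative of `u⁻¹` is a constant-coefficient combination of second
derivatives in the periodic variables. Integrating over a period, each `∫ ∂²u/∂θᵢ²` is the
difference of the values of the periodic function `∂u/∂θᵢ` at the ends of a period, hence `0`.
So `∫∫ u⁻¹` has vanishing time derivative; the fundamental theorem of calculus in `t` together
with Fubini makes this rigorous.
-/

open MeasureTheory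

section IntervalIntegral

variable {E : Type*} [NormedAddCommGroup E] [NormedSpace ℝ E]

theorem Function.Periodic.deriv {f : ℝ → E} {c : ℝ} (hf : Function.Periodic f c) :
    Function.Periodic (deriv f) c := fun x => by
  rw [← deriv_comp_add_const, show (fun y => f (y + c)) = f from funext hf]

theorem intervalIntegral_deriv_eq_zero_of_periodic [CompleteSpace E] {f : ℝ → E} {a c : ℝ}
    (hf : Function.Periodic f c) (hd : ∀ x ∈ uIcc a (a + c), DifferentiableAt ℝ f x)
    (hint : IntervalIntegrable (deriv f) volume a (a + c)) :
    ∫ x in a..a + c, deriv f x = 0 := by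
  rw [intervalIntegral.integral_deriv_eq_sub hd hint, hf a, sub_self]

theorem intervalIntegral_intervalIntegral_swap_of_continuous {F : ℝ → ℝ → E}
    (hF : Continuous (Function.uncurry F)) (a b c d : ℝ) :
    ∫ x in a..b, ∫ y in c..d, F x y = ∫ y in c..d, ∫ x in a..b, F x y :=
  intervalIntegral_intervalIntegral_swap <|
    (hF.continuousOn.integrableOn_compact (isCompact_uIcc.prod isCompact_uIcc)).mono_set
      (prod_mono uIoc_subset_uIcc uIoc_subset_uIcc)

theorem intervalIntegral_intervalIntegral_add {F G : ℝ → ℝ → E}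
    (hF : Continuous (Function.uncurry F)) (hG : Continuous (Function.uncurry G)) (a b c d : ℝ) :
    ∫ x in a..b, ∫ y in c..d, (F x y + G x y) =
      (∫ x in a..b, ∫ y in c..d, F x y) + ∫ x in a..b, ∫ y in c..d, G x y := by
  have hslice {H : ℝ → ℝ → E} (hH : Continuous (Function.uncurry H)) (x : ℝ) :
      IntervalIntegrable (H x) volume c d :=
    (hH.comp (Continuous.prodMk_right x)).intervalIntegrable c d
  have houter {H : ℝ → ℝ → E} (hH : Continuous (Function.uncurry H)) :
      IntervalIntegrable (fun x => ∫ y in c..d, H x y) volume a b :=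
    (intervalIntegral.continuous_parametric_intervalIntegral_of_continuous' hH c d).intervalIntegrable
      a b
  simp_rw [intervalIntegral.integral_add (hslice hF _) (hslice hG _)]
  exact intervalIntegral.integral_add (houter hF) (houter hG)

theorem intervalIntegral_intervalIntegral_intervalIntegral_swap {G : ℝ × ℝ × ℝ → E}
    (hG : Continuous G) (a b c d e f : ℝ) :
    ∫ x in a..b, ∫ y in c..d, ∫ s in e..f, G (x, y, s) =
      ∫ s in e..f, ∫ x in a..b, ∫ y in c..d, G (x, y, s) := by
  rw [← intervalIntegral_intervalIntegral_swap_of_continuous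
    (F := fun x s => ∫ y in c..d, G (x, y, s))
    (intervalIntegral.continuous_parametric_intervalIntegral_of_continuous'
      (f := fun (q : ℝ × ℝ) y => G (q.1, y, q.2)) (by fun_prop) c d)]
  refine intervalIntegral.integral_congr fun x _ => ?_
  exact intervalIntegral_intervalIntegral_swap_of_continuous
    (F := fun y s => G (x, y, s)) (by fun_prop) c d e f

end IntervalIntegral

section PlanePartials

variable {E : Type*} [NormedAddCommGroup E] [NormedSpace ℝ E]

noncomputable def partialFst (f : ℝ × ℝ → E) (q : ℝ × ℝ) : E := deriv (fun a => f (a, q.2)) q.1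

noncomputable def partialSnd (f : ℝ × ℝ → E) (q : ℝ × ℝ) : E := deriv (fun b => f (q.1, b)) q.2

theorem partialFst_eq_fderiv {f : ℝ × ℝ → E} (hf : Differentiable ℝ f) :
    partialFst f = fun q => fderiv ℝ f q (1, 0) := by
  ext ⟨x, y⟩
  exact ((hf (x, y)).hasFDerivAt.comp_hasDerivAt x ((hasDerivAt_id x).prodMk
    (hasDerivAt_const x y))).deriv

theorem partialSnd_eq_fderiv {f : ℝ × ℝ → E} (hf : Differentiable ℝ f) :
    partialSnd f = fun q => fderiv ℝ f q (0, 1) := by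
  ext ⟨x, y⟩
  exact ((hf (x, y)).hasFDerivAt.comp_hasDerivAt y ((hasDerivAt_const y x).prodMk
    (hasDerivAt_id y))).deriv

theorem ContDiff.partialFst {n : WithTop ℕ∞} {f : ℝ × ℝ → E} (hf : ContDiff ℝ (n + 1) f) :
    ContDiff ℝ n (partialFst f) := by
  rw [partialFst_eq_fderiv (hf.differentiable (by simp))]
  exact (hf.fderiv_right le_rfl).clm_apply contDiff_const

theorem ContDiff.partialSnd {n : WithTop ℕ∞} {f : ℝ × ℝ → E} (hf : ContDiff ℝ (n + 1) f) :
    ContDiff ℝ n (partialSnd f) := by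
  rw [partialSnd_eq_fderiv (hf.differentiable (by simp))]
  exact (hf.fderiv_right le_rfl).clm_apply contDiff_const

end PlanePartials

theorem integral_integral_partialFst_partialFst_eq_zero {f : ℝ × ℝ → ℝ} (hf : ContDiff ℝ 2 f)
    {c₁ : ℝ} (hper : ∀ x y, f (x + c₁, y) = f (x, y)) (a c d : ℝ) :
    ∫ x in a..a + c₁, ∫ y in c..d, partialFst (partialFst f) (x, y) = 0 := by
  have h₁ : ContDiff ℝ 1 (partialFst f) := hf.partialFst
  have h₀ : Continuous (partialFst (partialFst f)) := (h₁.partialFst (n := 0)).continuous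
  have hslice (y : ℝ) : ∫ x in a..a + c₁, partialFst (partialFst f) (x, y) = 0 :=
    intervalIntegral_deriv_eq_zero_of_periodic (f := fun x => partialFst f (x, y))
      (Function.Periodic.deriv (f := fun a => f (a, y)) fun x => hper x y)
      (fun x _ => ((h₁.differentiable one_ne_zero).comp (differentiable_id.prodMk
        (differentiable_const y))) x)
      ((h₀.comp (continuous_id.prodMk continuous_const)).intervalIntegrable _ _)
  rw [intervalIntegral_intervalIntegral_swap_of_continuous
    (F := fun x y => partialFst (partialFst f) (x, y)) h₀]
  simp [hslice]

theorem integral_integral_partialSnd_partialSnd_eq_zero {f : ℝ × ℝ → ℝ} (hf : ContDiff ℝ 2 f)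
    {c₂ : ℝ} (hper : ∀ x y, f (x, y + c₂) = f (x, y)) (a b c : ℝ) :
    ∫ x in a..b, ∫ y in c..c + c₂, partialSnd (partialSnd f) (x, y) = 0 := by
  have h₁ : ContDiff ℝ 1 (partialSnd f) := hf.partialSnd
  have h₀ : Continuous (partialSnd (partialSnd f)) := (h₁.partialSnd (n := 0)).continuous
  have hslice (x : ℝ) : ∫ y in c..c + c₂, partialSnd (partialSnd f) (x, y) = 0 :=
    intervalIntegral_deriv_eq_zero_of_periodic (f := fun y => partialSnd f (x, y))
      (Function.Periodic.deriv (f := fun b => f (x, b)) fun y => hper x y)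
      (fun y _ => ((h₁.differentiable one_ne_zero).comp ((differentiable_const x).prodMk
        differentiable_id)) y)
      ((h₀.comp (continuous_const.prodMk continuous_id)).intervalIntegrable _ _)
  simp [hslice]

theorem integral_integral_partials_eq_zero_of_periodic {f : ℝ × ℝ → ℝ} (hf : ContDiff ℝ 2 f)
    {c₁ c₂ : ℝ} (hper₁ : ∀ x y, f (x + c₁, y) = f (x, y)) (hper₂ : ∀ x y, f (x, y + c₂) = f (x, y))
    (α β a b : ℝ) :
    ∫ x in a..a + c₁, ∫ y in b..b + c₂,
      (α * partialFst (partialFst f) (x, y) + β * partialSnd (partialSnd f) (x, y)) = 0 := by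
  have h₁₁ : Continuous (partialFst (partialFst f)) :=
    (hf.partialFst (n := 1)).partialFst (n := 0) |>.continuous
  have h₂₂ : Continuous (partialSnd (partialSnd f)) :=
    (hf.partialSnd (n := 1)).partialSnd (n := 0) |>.continuous
  rw [intervalIntegral_intervalIntegral_add (by fun_prop) (by fun_prop)]
  simp only [intervalIntegral.integral_const_mul]
  rw [integral_integral_partialFst_partialFst_eq_zero hf hper₁,
    integral_integral_partialSnd_partialSnd_eq_zero hf hper₂]
  ring

section HalfSpace

variable {E : Type*} [NormedAddCommGroup E] [NormedSpace ℝ E]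

def halfSpace : Set (ℝ × ℝ × ℝ) := {p | 0 ≤ p.2.2}

theorem uniqueDiffOn_halfSpace : UniqueDiffOn ℝ halfSpace := by
  have h : halfSpace = univ ×ˢ univ ×ˢ Ici (0 : ℝ) := by ext; simp [halfSpace]
  rw [h]
  exact uniqueDiffOn_univ.prod (uniqueDiffOn_univ.prod (uniqueDiffOn_Ici 0))

noncomputable def timeDeriv (F : ℝ × ℝ × ℝ → E) (p : ℝ × ℝ × ℝ) : E :=
  derivWithin (fun s => F (p.1, p.2.1, s)) (Ici 0) p.2.2

theorem DifferentiableOn.hasDerivWithinAt_fderivWithin_time {F : ℝ × ℝ × ℝ → E}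
    (hF : DifferentiableOn ℝ F halfSpace) {x y t : ℝ} (ht : 0 ≤ t) :
    HasDerivWithinAt (fun s => F (x, y, s)) (fderivWithin ℝ F halfSpace (x, y, t) (0, 0, 1))
      (Ici 0) t :=
  (hF (x, y, t) ht).hasFDerivWithinAt.comp_hasDerivWithinAt t
    ((hasDerivAt_const t x).prodMk
      ((hasDerivAt_const t y).prodMk (hasDerivAt_id t))).hasDerivWithinAt
    fun _ hs => hs

theorem DifferentiableOn.timeDeriv_eq_fderivWithin {F : ℝ × ℝ × ℝ → E}
    (hF : DifferentiableOn ℝ F halfSpace) {x y t : ℝ} (ht : 0 ≤ t) :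
    timeDeriv F (x, y, t) = fderivWithin ℝ F halfSpace (x, y, t) (0, 0, 1) :=
  (hF.hasDerivWithinAt_fderivWithin_time ht).derivWithin (uniqueDiffOn_Ici 0 t ht)

theorem DifferentiableOn.hasDerivWithinAt_timeDeriv {F : ℝ × ℝ × ℝ → E}
    (hF : DifferentiableOn ℝ F halfSpace) {x y t : ℝ} (ht : 0 ≤ t) :
    HasDerivWithinAt (fun s => F (x, y, s)) (timeDeriv F (x, y, t)) (Ici 0) t := by
  rw [hF.timeDeriv_eq_fderivWithin ht]
  exact hF.hasDerivWithinAt_fderivWithin_time ht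

theorem ContDiffOn.continuousOn_timeDeriv {F : ℝ × ℝ × ℝ → E}
    (hF : ContDiffOn ℝ 1 F halfSpace) : ContinuousOn (timeDeriv F) halfSpace :=
  ((hF.continuousOn_fderivWithin uniqueDiffOn_halfSpace le_rfl).clm_apply
    continuousOn_const).congr fun ⟨_, _, _⟩ ht =>
      (hF.differentiableOn one_ne_zero).timeDeriv_eq_fderivWithin ht

theorem integral_integral_eq_of_hasDerivWithinAt [CompleteSpace E] {φ ψ : ℝ × ℝ × ℝ → E}
    (hφ : ContinuousOn φ halfSpace) (hψ : ContinuousOn ψ halfSpace)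
    (hφψ : ∀ x y t, 0 ≤ t → HasDerivWithinAt (fun s => φ (x, y, s)) (ψ (x, y, t)) (Ici 0) t)
    {a b c d : ℝ} (hψ_zero : ∀ t, 0 ≤ t → ∫ x in a..b, ∫ y in c..d, ψ (x, y, t) = 0)
    {t : ℝ} (ht : 0 ≤ t) :
    ∫ x in a..b, ∫ y in c..d, φ (x, y, t) = ∫ x in a..b, ∫ y in c..d, φ (x, y, 0) := by
  -- Clamping time at `0` extends `ψ` continuously to all of `ℝ³`, where Fubini applies.
  set ψ' : ℝ × ℝ × ℝ → E := fun p => ψ (p.1, p.2.1, max p.2.2 0)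
  have hψ' : Continuous ψ' := hψ.comp_continuous (by fun_prop) fun p => le_max_right p.2.2 0
  have hψ'_eq (x y s : ℝ) (hs : 0 ≤ s) : ψ' (x, y, s) = ψ (x, y, s) := by simp [ψ', hs]
  have hφ₀ : Continuous fun q : ℝ × ℝ => φ (q.1, q.2, 0) :=
    hφ.comp_continuous (by fun_prop) fun _ => le_refl (0 : ℝ)
  have hftc (x y : ℝ) : φ (x, y, t) = φ (x, y, 0) + ∫ s in 0..t, ψ' (x, y, s) := by
    have hφ_slice : ContinuousOn (fun s => φ (x, y, s)) (Icc 0 t) :=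
      hφ.comp (by fun_prop) fun s hs => hs.1
    have hψ_slice : Continuous fun s => ψ' (x, y, s) := by fun_prop
    rw [intervalIntegral.integral_eq_sub_of_hasDeriv_right_of_le ht hφ_slice ?_
      (hψ_slice.intervalIntegrable _ _), add_sub_cancel]
    intro s hs
    rw [hψ'_eq x y s hs.1.le]
    exact (hφψ x y s hs.1.le).mono (Ioi_subset_Ici hs.1.le)
  have hΨ : Continuous fun q : ℝ × ℝ => ∫ s in 0..t, ψ' (q.1, q.2, s) :=
    intervalIntegral.continuous_parametric_intervalIntegral_of_continuous'
      (f := fun (q : ℝ × ℝ) s => ψ' (q.1, q.2, s)) (by fun_prop) 0 t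
  calc ∫ x in a..b, ∫ y in c..d, φ (x, y, t)
      = ∫ x in a..b, ∫ y in c..d, (φ (x, y, 0) + ∫ s in 0..t, ψ' (x, y, s)) := by
        simp_rw [hftc]
    _ = (∫ x in a..b, ∫ y in c..d, φ (x, y, 0)) +
          ∫ x in a..b, ∫ y in c..d, ∫ s in 0..t, ψ' (x, y, s) :=
        intervalIntegral_intervalIntegral_add (F := fun x y => φ (x, y, 0))
          (G := fun x y => ∫ s in 0..t, ψ' (x, y, s)) hφ₀ hΨ a b c d
    _ = (∫ x in a..b, ∫ y in c..d, φ (x, y, 0)) +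
          ∫ s in 0..t, ∫ x in a..b, ∫ y in c..d, ψ' (x, y, s) := by
        rw [intervalIntegral_intervalIntegral_intervalIntegral_swap hψ']
    _ = ∫ x in a..b, ∫ y in c..d, φ (x, y, 0) := by
      rw [add_eq_left]
      refine (intervalIntegral.integral_congr (g := fun _ => 0) fun s hs => ?_).trans
        intervalIntegral.integral_zero
      rw [uIcc_of_le ht] at hs
      simp only [hψ'_eq _ _ s hs.1, hψ_zero s hs.1]

end HalfSpace

theorem QuasiSphericalSol.integral_integral_inv_eq {l₁ l : ℝ} {u : ℝ → ℝ → ℝ → ℝ}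
    (hsol : QuasiSphericalSol l₁ l u) (hsmooth : SmoothOnHalf u)
    (hpos : ∀ θ₁ θ₂ t, 0 ≤ t → 0 < u θ₁ θ₂ t) (hper : Periodic2 u) {t : ℝ} (ht : 0 ≤ t) :
    ∫ x in (0 : ℝ)..2 * π, ∫ y in (0 : ℝ)..2 * π, (u x y t)⁻¹ =
      ∫ x in (0 : ℝ)..2 * π, ∫ y in (0 : ℝ)..2 * π, (u x y 0)⁻¹ := by
  set U : ℝ × ℝ × ℝ → ℝ := fun p => u p.1 p.2.1 p.2.2
  have hU : ContDiffOn ℝ 1 U halfSpace := hsmooth.of_le (WithTop.coe_le_coe.2 le_top)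
  have hU₀ (p : ℝ × ℝ × ℝ) (hp : p ∈ halfSpace) : U p ≠ 0 := (hpos _ _ _ hp).ne'
  refine integral_integral_eq_of_hasDerivWithinAt (φ := fun p => (U p)⁻¹)
    (ψ := fun p => -timeDeriv U p / U p ^ 2) (hU.continuousOn.inv₀ hU₀)
    (hU.continuousOn_timeDeriv.neg.div (hU.continuousOn.pow 2) fun p hp => pow_ne_zero 2 (hU₀ p hp))
    (fun x y s hs => ((hU.differentiableOn one_ne_zero).hasDerivWithinAt_timeDeriv hs).inv
      (hU₀ _ hs)) (fun s hs => ?_) ht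
  set f : ℝ × ℝ → ℝ := fun q => u q.1 q.2 s
  have hf : ContDiff ℝ 2 f :=
    (hsmooth.comp_contDiff (f := fun q : ℝ × ℝ => (q.1, q.2, s)) (by fun_prop)
      fun _ => hs).of_le (WithTop.coe_le_coe.2 le_top)
  have hψ (x y : ℝ) : -timeDeriv U (x, y, s) / U (x, y, s) ^ 2 =
      -((l₁ + s) * ((l₁ + s) ^ 2)⁻¹) * partialFst (partialFst f) (x, y) +
        -((l₁ + s) * (l ^ 2)⁻¹) * partialSnd (partialSnd f) (x, y) := by
    have hu : u x y s ≠ 0 := (hpos x y s hs).ne'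
    change -timeDeriv U (x, y, s) / u x y s ^ 2 =
      _ * deriv (deriv fun a => u a y s) x + _ * deriv (deriv fun b => u x b s) y
    rw [show timeDeriv U (x, y, s) = _ from hsol x y s hs]
    generalize ((l₁ + s) ^ 2)⁻¹ = A
    generalize (l ^ 2)⁻¹ = B
    field_simp
    ring
  have hzero := integral_integral_partials_eq_zero_of_periodic hf (fun x y => (hper x y s).1)
    (fun x y => (hper x y s).2) (-((l₁ + s) * ((l₁ + s) ^ 2)⁻¹)) (-((l₁ + s) * (l ^ 2)⁻¹)) 0 0
  rw [zero_add] at hzero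
  simpa only [hψ] using hzero

theorem stmt7_general (l₁ l : ℝ) (hl₁ : 0 < l₁)
    (u : ℝ → ℝ → ℝ → ℝ)
    (hsmooth : SmoothOnHalf u)
    (hpos : ∀ θ₁ θ₂ t : ℝ, 0 ≤ t → 0 < u θ₁ θ₂ t)
    (hper : Periodic2 u)
    (hsol : QuasiSphericalSol l₁ l u) :
    ∀ t : ℝ, 0 ≤ t →
      (∫ x in (0:ℝ)..(2 * π), ∫ y in (0:ℝ)..(2 * π), (u x y t)⁻¹) =
        (∫ x in (0:ℝ)..(2 * π), ∫ y in (0:ℝ)..(2 * π), (u x y 0)⁻¹) ∧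
      (l₁ + t) * l * (∫ x in (0:ℝ)..(2 * π), ∫ y in (0:ℝ)..(2 * π), (u x y t)⁻¹) =
        ((l₁ + t) / l₁) *
          (l₁ * l * ∫ x in (0:ℝ)..(2 * π), ∫ y in (0:ℝ)..(2 * π), (u x y 0)⁻¹) := by
  intro t ht
  have hconst := hsol.integral_integral_inv_eq hsmooth hpos hper ht
  refine ⟨hconst, ?_⟩
  rw [hconst]
  field_simp

theorem stmt7 (l₁ l : ℝ) (hl₁ : 0 < l₁) (hl : 0 < l)
    (u : ℝ → ℝ → ℝ → ℝ)
    (hsmooth : SmoothOnHalf u)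
    (hpos : ∀ θ₁ θ₂ t : ℝ, 0 ≤ t → 0 < u θ₁ θ₂ t)
    (hper : Periodic2 u)
    (hsol : QuasiSphericalSol l₁ l u) :
    ∀ t : ℝ, 0 ≤ t →
      (∫ x in (0:ℝ)..(2 * π), ∫ y in (0:ℝ)..(2 * π), (u x y t)⁻¹) =
        (∫ x in (0:ℝ)..(2 * π), ∫ y in (0:ℝ)..(2 * π), (u x y 0)⁻¹) ∧
      (l₁ + t) * l * (∫ x in (0:ℝ)..(2 * π), ∫ y in (0:ℝ)..(2 * π), (u x y t)⁻¹) =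
        ((l₁ + t) / l₁) *
          (l₁ * l * ∫ x in (0:ℝ)..(2 * π), ∫ y in (0:ℝ)..(2 * π), (u x y 0)⁻¹) :=
  stmt7_general l₁ l hl₁ u hsmooth hpos hper hsol
end
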